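/- arXiv:1409.7996 — 2 statements merged into one kernel-verified Lean document; each statement's English description precedes it below -/
import Mathlib

section
/- Let v be a simplicial vertex of GT_λ (λ regular) with permutation w = w_v, and let F be the monomial substitution t_{0,j} ↦ x_1, t_{i,j} ↦ x_i^{-1}x_{i+1} for i ≥ 1. Then for the edge of the tangent cone C_v with direction vector ε associated to the pair (a,b) (1 ≤ a ≤ b ≤ n−1), one has F(t^ε) = x_{b+1}/x_a if w^{-1}(a) < w^{-1}(b+1), and F(t^ε) = x_a/x_{b+1} otherwise; in both cases F(t^ε) = w(x_{max(w^{-1}(a),w^{-1}(b+1))}/x_{min(w^{-1}(a),w^{-1}(b+1))}). -/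
open scoped BigOperators Classical

/-- Index type for Gelfand–Tsetlin pattern positions: (row, column), 0-based. -/
abbrev GTIdx (n : ℕ) := Fin n × Fin n

/-- A position (i,j) is a valid pattern position iff i + j < n (row i has columns 0..n-1-i). -/
def GTValid (n : ℕ) (p : GTIdx n) : Prop := (p.1 : ℕ) + (p.2 : ℕ) < n

/-- Entry of a real point at natural-number coordinates (0 outside the index range). -/
noncomputable def entryR {n : ℕ} (A : GTIdx n → ℝ) (i j : ℕ) : ℝ :=
  if h : i < n ∧ j < n then A (⟨i, h.1⟩, ⟨j, h.2⟩) else 0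

/-- Entry of an integer point at natural-number coordinates (0 outside the index range). -/
def entryZ {n : ℕ} (A : GTIdx n → ℤ) (i j : ℕ) : ℤ :=
  if h : i < n ∧ j < n then A (⟨i, h.1⟩, ⟨j, h.2⟩) else 0

/-- The Gelfand–Tsetlin polytope of λ: top row equal to λ, interlacing inequalities,
and (as a normalization embedding it in a finite-dimensional space) zero at invalid positions. -/
def GTPoly (n : ℕ) (lam : Fin n → ℝ) : Set (GTIdx n → ℝ) :=
  {A | (∀ j : Fin n, entryR A 0 j = lam j)
    ∧ (∀ i j : ℕ, i + 1 + j < n →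
        entryR A (i+1) j ≤ entryR A i j ∧ entryR A i (j+1) ≤ entryR A (i+1) j)
    ∧ (∀ p : GTIdx n, ¬ GTValid n p → A p = 0)}

/-- Integer Gelfand–Tsetlin patterns with top row λ. -/
def GTPat (n : ℕ) (lam : Fin n → ℤ) : Set (GTIdx n → ℤ) :=
  {A | (∀ j : Fin n, entryZ A 0 j = lam j)
    ∧ (∀ i j : ℕ, i + 1 + j < n →
        entryZ A (i+1) j ≤ entryZ A i j ∧ entryZ A i (j+1) ≤ entryZ A (i+1) j)
    ∧ (∀ p : GTIdx n, ¬ GTValid n p → A p = 0)}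

/-- The weight of a pattern: μ_i = (sum of row i-1) - (sum of row i), 1-based;
here `i : Fin n` is 0-based, so `wtZ A i = (row i sum) - (row (i+1) sum)`. -/
def wtZ {n : ℕ} (A : GTIdx n → ℤ) (i : Fin n) : ℤ :=
  (∑ j : Fin n, entryZ A i j) - ∑ j : Fin n, entryZ A ((i : ℕ) + 1) j

noncomputable def wtR {n : ℕ} (A : GTIdx n → ℝ) (i : Fin n) : ℝ :=
  (∑ j : Fin n, entryR A i j) - ∑ j : Fin n, entryR A ((i : ℕ) + 1) j

/-- Multiset of entries of row i. -/
noncomputable def rowM {n : ℕ} (A : GTIdx n → ℝ) (i : ℕ) : Multiset ℝ :=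
  (Finset.univ.filter (fun j : Fin n => i + (j : ℕ) < n)).val.map (fun j => entryR A i (j : ℕ))

/-- Valid pattern positions (the nodes of the ambient graph T). -/
abbrev GTNode (n : ℕ) := {p : GTIdx n // GTValid n p}

/-- `upEdge n p q` : q is an upper neighbour of p in the triangular graph T,
i.e. q = (i-1, j) or (i-1, j+1) where p = (i, j). -/
def upEdge (n : ℕ) (p q : GTIdx n) : Prop :=
  GTValid n p ∧ GTValid n q ∧ (q.1 : ℕ) + 1 = (p.1 : ℕ) ∧
    ((q.2 : ℕ) = (p.2 : ℕ) ∨ (q.2 : ℕ) = (p.2 : ℕ) + 1)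

/-- The equality graph Γ_v of a point v of the GT polytope: nodes are valid positions,
edges join a position to an upper neighbour carrying an equal entry. -/
def Gamma (n : ℕ) (A : GTIdx n → ℝ) : SimpleGraph (GTNode n) where
  Adj p q := (upEdge n p.1 q.1 ∨ upEdge n q.1 p.1) ∧ A p.1 = A q.1
  symm := by
    constructor
    rintro p q ⟨h, e⟩
    exact ⟨h.symm, e.symm⟩
  loopless := by
    constructor
    rintro p ⟨h | h, _⟩ <;> exact absurd h.2.2.1 (by omega)

/-- Tangent cone of a convex set P at a point v. -/
def tangentCone {E : Type*} [AddCommGroup E] [Module ℝ E] (P : Set E) (v : E) : Set E :=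
  {y | ∃ x ∈ P, ∃ t : ℝ, 0 ≤ t ∧ y = v + t • (x - v)}

/-- The ray from v in direction ε. -/
def raySet {E : Type*} [AddCommGroup E] [Module ℝ E] (v ε : E) : Set E :=
  {y | ∃ t : ℝ, 0 ≤ t ∧ y = v + t • ε}

/-- ε is the direction of an edge (one-dimensional extreme face) of the cone C with apex v. -/
def IsEdgeDir {E : Type*} [AddCommGroup E] [Module ℝ E] (C : Set E) (v ε : E) : Prop :=
  ε ≠ 0 ∧ IsExtreme ℝ C (raySet v ε)

/-- Direction-vector pattern for edges at a simplicial vertex: all nonzero coordinates lie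
in rows a..b, one per row, and all are equal to c. -/
def simpDir (n : ℕ) (a b : ℕ) (c : ℝ) (ε : GTIdx n → ℝ) : Prop :=
  (∀ p : GTIdx n, ε p ≠ 0 → GTValid n p ∧ a ≤ (p.1 : ℕ) ∧ (p.1 : ℕ) ≤ b)
  ∧ (∀ r : ℕ, a ≤ r → r ≤ b → ∃! p : GTIdx n, (p.1 : ℕ) = r ∧ ε p ≠ 0)
  ∧ (∀ p : GTIdx n, ε p ≠ 0 → ε p = c)

/-- A simplicial vertex: a vertex (extreme point) of the GT polytope whose equality graph
is acyclic. -/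
def IsSimpVertex (n : ℕ) (lam : Fin n → ℝ) (A : GTIdx n → ℝ) : Prop :=
  A ∈ Set.extremePoints ℝ (GTPoly n lam) ∧ (Gamma n A).IsAcyclic

/- ### Rational functions, integer-point transforms, and the specialization F -/

/-- Field of rational functions in variables indexed by ι. -/
abbrev KK (ι : Type) := FractionRing (MvPolynomial ι ℚ)

/-- The monomial t^u, u ∈ ℤ^ι, inside the rational function field. -/
noncomputable def tmon (ι : Type) [Fintype ι] (u : ι → ℤ) : KK ι :=
  ∏ i, (algebraMap (MvPolynomial ι ℚ) (KK ι) (MvPolynomial.X i)) ^ (u i)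

/-- Indicator (as coefficient function of a formal Laurent series) of the integer points of S. -/
noncomputable def indSet {ι : Type} (S : Set (ι → ℝ)) : (ι → ℤ) → ℚ :=
  fun a => if (fun i => (a i : ℝ)) ∈ S then 1 else 0

/-- `Represents r f` : the rational function r is the integer-point transform of the formal
Laurent series with coefficient function f, i.e. there is a nonzero Laurent polynomial q such
that q·f is a (finitely supported) Laurent polynomial g and r·q = g as rational functions. -/
noncomputable def Represents {ι : Type} [Fintype ι] (r : KK ι) (f : (ι → ℤ) → ℚ) : Prop :=
  ∃ q : (ι → ℤ) →₀ ℚ, q ≠ 0 ∧ ∃ g : (ι → ℤ) →₀ ℚ,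
    (∀ a, g a = ∑ b ∈ q.support, q b * f (a - b)) ∧
    r * (∑ b ∈ q.support, (q b : KK ι) * tmon ι b)
      = ∑ a ∈ g.support, (g a : KK ι) * tmon ι a

/-- Field of rational functions in x_1, ..., x_n. -/
abbrev Kx (n : ℕ) := FractionRing (MvPolynomial (Fin n) ℚ)

/-- The variable x_i. -/
noncomputable def xv (n : ℕ) (i : Fin n) : Kx n :=
  algebraMap (MvPolynomial (Fin n) ℚ) (Kx n) (MvPolynomial.X i)

/-- The substitution underlying F: t_{0,j} ↦ x_1 and t_{i,j} ↦ x_i⁻¹ x_{i+1} for i ≥ 1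
(1-based x's; in our 0-based indexing t_{i,·} ↦ x_{i-1}⁻¹ · x_i for i ≥ 1, t_{0,·} ↦ x_0). -/
noncomputable def xsub (n : ℕ) (p : GTIdx n) : Kx n :=
  if (p.1 : ℕ) = 0 then xv n p.1
  else (xv n (⟨(p.1 : ℕ) - 1, Nat.lt_of_le_of_lt (Nat.sub_le _ _) p.1.isLt⟩ : Fin n))⁻¹ * xv n p.1

/-- The specialization F on Laurent polynomials, as a ring homomorphism. -/
noncomputable def phiF (n : ℕ) : MvPolynomial (GTIdx n) ℚ →+* Kx n :=
  MvPolynomial.eval₂Hom (Rat.castHom (Kx n)) (xsub n)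

/-- `FSpec n r y` : the specialization F of the rational function r (in the t-variables)
is defined and equal to y; i.e. r = p/q with F(q) ≠ 0 and y = F(p)/F(q). -/
noncomputable def FSpec (n : ℕ) (r : KK (GTIdx n)) (y : Kx n) : Prop :=
  ∃ p q : MvPolynomial (GTIdx n) ℚ, phiF n q ≠ 0 ∧
    r * algebraMap (MvPolynomial (GTIdx n) ℚ) (KK (GTIdx n)) q
      = algebraMap (MvPolynomial (GTIdx n) ℚ) (KK (GTIdx n)) p ∧
    y * phiF n q = phiF n p

/-- The monomial e^μ = x^μ for an integral weight μ. -/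
noncomputable def emon {n : ℕ} (mu : Fin n → ℤ) : Kx n := ∏ i, xv n i ^ mu i

/-- ρ = (n-1, n-2, ..., 0). -/
def rhoW (n : ℕ) (i : Fin n) : ℤ := (n : ℤ) - 1 - (i : ℤ)

/-- The Schur (Laurent) polynomial of λ, defined by Weyl's character formula
(bialternant form). -/
noncomputable def schur (n : ℕ) (lam : Fin n → ℤ) : Kx n :=
  (∑ w : Equiv.Perm (Fin n), ((Equiv.Perm.sign w : ℤ) : Kx n)
      * ∏ i, xv n i ^ (lam (w⁻¹ i) + rhoW n (w⁻¹ i)))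
  / (∑ w : Equiv.Perm (Fin n), ((Equiv.Perm.sign w : ℤ) : Kx n)
      * ∏ i, xv n i ^ (rhoW n (w⁻¹ i)))

/-- The summand w(e^λ / Π_{i<j} (1 - x_j/x_i)) of Weyl's character formula. -/
noncomputable def weylTerm (n : ℕ) (lam : Fin n → ℤ) (w : Equiv.Perm (Fin n)) : Kx n :=
  (∏ i, xv n (w i) ^ lam i)
    / ∏ p ∈ Finset.univ.filter (fun p : Fin n × Fin n => p.1 < p.2),
        (1 - xv n (w p.2) / xv n (w p.1))

/-- Integer version of the edge-direction pattern. -/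
def simpDirZ (n : ℕ) (a b : ℕ) (c : ℤ) (ε : GTIdx n → ℤ) : Prop :=
  (∀ p : GTIdx n, ε p ≠ 0 → GTValid n p ∧ a ≤ (p.1 : ℕ) ∧ (p.1 : ℕ) ≤ b)
  ∧ (∀ r : ℕ, a ≤ r → r ≤ b → ∃! p : GTIdx n, (p.1 : ℕ) = r ∧ ε p ≠ 0)
  ∧ (∀ p : GTIdx n, ε p ≠ 0 → ε p = c)

/-- F(t^u): the specialization of the Laurent monomial t^u. -/
noncomputable def Fmon (n : ℕ) (u : GTIdx n → ℤ) : Kx n := ∏ p, xsub n p ^ u p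

/-- A rational polytope in ℝ^m: a bounded set cut out by finitely many integral
linear inequalities. -/
def IsRatPolytope (m : ℕ) (P : Set (Fin m → ℝ)) : Prop :=
  Bornology.IsBounded P ∧ ∃ (k : ℕ) (a : Fin k → Fin m → ℤ) (b : Fin k → ℤ),
    P = {x | ∀ i, ∑ j, (a i j : ℝ) * x j ≤ (b i : ℝ)}

/-- A rational polyhedron in ℝ^m. -/
def IsRatPolyhedron (m : ℕ) (P : Set (Fin m → ℝ)) : Prop :=
  ∃ (k : ℕ) (a : Fin k → Fin m → ℤ) (b : Fin k → ℤ),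
    P = {x | ∀ i, ∑ j, (a i j : ℝ) * x j ≤ (b i : ℝ)}

/-- The cone C_Δ attached to a connected component Δ = c of the equality graph Γ_v:
vectors supported on the nodes of Δ, vanishing at the top (row-0) node of Δ, and
satisfying the interlacing inequalities along the edges of Δ. -/
noncomputable def compCone (n : ℕ) (A : GTIdx n → ℝ) (c : (Gamma n A).ConnectedComponent) :
    Set (GTIdx n → ℝ) :=
  {x | (∀ p : GTIdx n,
          (¬ ∃ hp : GTValid n p, (Gamma n A).connectedComponentMk ⟨p, hp⟩ = c) → x p = 0)
    ∧ (∀ p : GTNode n, (Gamma n A).connectedComponentMk p = c → (p.1.1 : ℕ) = 0 → x p.1 = 0)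
    ∧ (∀ p q : GTNode n, (Gamma n A).connectedComponentMk p = c →
        upEdge n p.1 q.1 → A p.1 = A q.1 →
        (((q.1.2 : ℕ) = (p.1.2 : ℕ)) → x p.1 ≤ x q.1) ∧
        (((q.1.2 : ℕ) = (p.1.2 : ℕ) + 1) → x q.1 ≤ x p.1))}

/-!
For r ≥ 1 the substitution F sends t_{r,j} to x_r / x_{r-1} whatever the column j, so a
monomial t^ε with a single exponent c in each row a, …, b is sent to the telescoping product
∏_{r=a}^{b} (x_r / x_{r-1})^c = (x_b / x_{a-1})^c.
-/

theorem Finset.prod_Ico_div_of_ne_zero {K : Type*} [Field K] {f : ℕ → K} (hf : ∀ i, f i ≠ 0)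
    {m n : ℕ} (hmn : m ≤ n) : ∏ i ∈ Finset.Ico m n, f (i + 1) / f i = f n / f m := by
  simpa using congrArg Units.val
    (Finset.prod_Ico_div (f := fun i => Units.mk0 (f i) (hf i)) hmn)

noncomputable def xvNat (n r : ℕ) : Kx n := if h : r < n then xv n ⟨r, h⟩ else 1

theorem xv_ne_zero (n : ℕ) (i : Fin n) : xv n i ≠ 0 :=
  (map_ne_zero_iff _ (IsFractionRing.injective _ _)).mpr (MvPolynomial.X_ne_zero i)

theorem xvNat_ne_zero (n r : ℕ) : xvNat n r ≠ 0 := by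
  unfold xvNat
  split
  · exact xv_ne_zero n _
  · exact one_ne_zero

theorem xsub_of_row_pos {n : ℕ} (p : GTIdx n) (hp : 1 ≤ (p.1 : ℕ)) :
    xsub n p = xvNat n p.1 / xvNat n ((p.1 : ℕ) - 1) := by
  rw [xsub, if_neg (by omega), xvNat, xvNat, dif_pos p.1.isLt, dif_pos (by omega),
    div_eq_inv_mul]

theorem Fmon_of_simpDirZ {n a b : ℕ} {c : ℤ} {ε : GTIdx n → ℤ} (ha : 1 ≤ a) (hab : a ≤ b)
    (hb : b < n) (hε : simpDirZ n a b c ε) :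
    Fmon n ε = (xv n ⟨b, hb⟩ / xv n ⟨a - 1, by omega⟩) ^ c := by
  obtain ⟨hsupp, hrow, hval⟩ := hε
  calc Fmon n ε = ∏ p ∈ Finset.univ.filter (fun p => ε p ≠ 0), xsub n p ^ c := by
        rw [Fmon, ← Finset.prod_filter_of_ne (p := fun p => ε p ≠ 0)]
        · exact Finset.prod_congr rfl fun p hp => by rw [hval p (Finset.mem_filter.mp hp).2]
        · intro p _ hne hp
          exact hne (by rw [hp, zpow_zero])
    _ = ∏ i ∈ Finset.Ico (a - 1) b, (xvNat n (i + 1) / xvNat n i) ^ c := by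
        refine Finset.prod_bij (fun p _ => (p.1 : ℕ) - 1) ?_ ?_ ?_ ?_
        · intro p hp
          obtain ⟨-, hap, hpb⟩ := hsupp p (Finset.mem_filter.mp hp).2
          exact Finset.mem_Ico.mpr ⟨by omega, by omega⟩
        · intro p hp q hq hpq
          obtain ⟨-, hap, hpb⟩ := hsupp p (Finset.mem_filter.mp hp).2
          obtain ⟨-, haq, -⟩ := hsupp q (Finset.mem_filter.mp hq).2
          exact (hrow p.1 hap hpb).unique ⟨rfl, (Finset.mem_filter.mp hp).2⟩
            ⟨by omega, (Finset.mem_filter.mp hq).2⟩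
        · intro i hi
          obtain ⟨hai, hib⟩ := Finset.mem_Ico.mp hi
          obtain ⟨p, ⟨hpi, hp⟩, -⟩ := hrow (i + 1) (by omega) (by omega)
          exact ⟨p, Finset.mem_filter.mpr ⟨Finset.mem_univ p, hp⟩, by omega⟩
        · intro p hp
          obtain ⟨-, hap, -⟩ := hsupp p (Finset.mem_filter.mp hp).2
          rw [Nat.sub_add_cancel (ha.trans hap), xsub_of_row_pos p (ha.trans hap)]
    _ = (xv n ⟨b, hb⟩ / xv n ⟨a - 1, by omega⟩) ^ c := by
        rw [Finset.prod_zpow, Finset.prod_Ico_div_of_ne_zero (xvNat_ne_zero n) (by omega),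
          xvNat, xvNat, dif_pos hb, dif_pos (by omega)]

/-- Indices are 0-based: the paper's `x_a` and `x_{b+1}` are `xv n ⟨a - 1, _⟩` and
`xv n ⟨b, _⟩`. -/
theorem statement11 (n : ℕ)
    (w : Equiv.Perm (Fin n))
    (a b : ℕ) (ha : 1 ≤ a) (hab : a ≤ b) (hb : b ≤ n - 1)
    (ε : GTIdx n → ℤ)
    (hpat : simpDirZ n a b
      (if w⁻¹ ⟨a - 1, by omega⟩ < w⁻¹ ⟨b, by omega⟩ then (1 : ℤ) else -1) ε) :
    Fmon n ε
      = (if w⁻¹ ⟨a - 1, by omega⟩ < w⁻¹ ⟨b, by omega⟩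
         then xv n ⟨b, by omega⟩ / xv n ⟨a - 1, by omega⟩
         else xv n ⟨a - 1, by omega⟩ / xv n ⟨b, by omega⟩) ∧
    Fmon n ε
      = xv n (w (max (w⁻¹ ⟨a - 1, by omega⟩) (w⁻¹ ⟨b, by omega⟩)))
        / xv n (w (min (w⁻¹ ⟨a - 1, by omega⟩) (w⁻¹ ⟨b, by omega⟩))) := by
  rw [Fmon_of_simpDirZ ha hab (by omega) hpat]
  split_ifs with hlt
  · rw [max_eq_right hlt.le, min_eq_left hlt.le]
    simp
  · rw [max_eq_left (not_lt.mp hlt), min_eq_right (not_lt.mp hlt)]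
    simp
end

section
/- For a vertex v of GT_λ (λ regular), the tangent cone decomposes as the direct Minkowski sum C_v = v + Σ_Δ C_Δ over the connected components Δ of Γ_v, where C_Δ is the cone of vectors supported on the nodes of Δ, vanishing at the top node of Δ, and satisfying the interlacing inequalities along edges of Δ; consequently σ(C_v) = t^v · Π_Δ σ(C_Δ). -/
open scoped BigOperators Classical

/-!
At any point `v` of the Gelfand–Tsetlin polytope, the directions `y - v` of the tangent cone are
cut out by the top-row condition and by those interlacing inequalities that are tight at `v`, i.e.
by the edges of `Γ_v`. These conditions only couple coordinates within one connected component
of `Γ_v`, so restricting a direction to the components decomposes it, uniquely, into vectors of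
the cones `C_Δ`. On integer points the decomposition becomes a direct product over disjoint blocks
of coordinates, and the integer-point transform is multiplicative for such products: if
`q f = g` and `q' f' = g'` with Laurent polynomials `q, q', g, g'`, then `(q q') (f f') = g g'`,
the product `f f'` of series living on complementary blocks being a finite sum at every exponent.
Translating by `v` multiplies the transform by `t^v`.
-/

lemma algebraMap_X_ne_zero {ι : Type} (i : ι) :
    algebraMap (MvPolynomial ι ℚ) (KK ι) (MvPolynomial.X i) ≠ 0 := by
  simp [MvPolynomial.X_ne_zero]

section LaurentSeries

variable {ι : Type} [Fintype ι]

lemma tmon_zero : tmon ι 0 = 1 := by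
  simp [tmon]

lemma tmon_add (u v : ι → ℤ) : tmon ι (u + v) = tmon ι u * tmon ι v := by
  simp only [tmon, ← Finset.prod_mul_distrib, Pi.add_apply, zpow_add₀ (algebraMap_X_ne_zero _)]

noncomputable def tmonHom : Multiplicative (ι → ℤ) →* KK ι where
  toFun u := tmon ι u.toAdd
  map_one' := tmon_zero
  map_mul' u v := tmon_add u.toAdd v.toAdd

noncomputable def laurentEval : AddMonoidAlgebra ℚ (ι → ℤ) →ₐ[ℚ] KK ι :=
  AddMonoidAlgebra.lift ℚ (KK ι) (ι → ℤ) tmonHom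

lemma laurentEval_ofCoeff (q : (ι → ℤ) →₀ ℚ) :
    laurentEval (.ofCoeff q) = ∑ b ∈ q.support, (q b : KK ι) * tmon ι b := by
  simp [laurentEval, AddMonoidAlgebra.lift_apply, Finsupp.sum, Algebra.smul_def, tmonHom]

lemma laurentEval_single (v : ι → ℤ) :
    laurentEval (AddMonoidAlgebra.single v (1 : ℚ)) = tmon ι v := by
  rw [laurentEval, AddMonoidAlgebra.lift_single, Algebra.smul_def, map_one, one_mul]
  rfl

noncomputable def natExponent (x : ι → ℤ) : ι →₀ ℕ :=
  Finsupp.equivFunOnFinite.symm fun i => (x i).toNat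

lemma algebraMap_monomial_natExponent {x : ι → ℤ} (hx : 0 ≤ x) (c : ℚ) :
    algebraMap _ (KK ι) (MvPolynomial.monomial (natExponent x) c) = c * tmon ι x := by
  rw [MvPolynomial.monomial_eq, Finsupp.prod_fintype _ _ (by simp), map_mul, map_prod, tmon,
    ← eq_ratCast ((algebraMap (MvPolynomial ι ℚ) (KK ι)).comp MvPolynomial.C) c]
  congr 1
  refine Finset.prod_congr rfl fun i _ => ?_
  rw [map_pow, ← zpow_natCast]
  simp [natExponent, Int.toNat_of_nonneg (hx i)]

lemma laurentEval_injective : Function.Injective (laurentEval (ι := ι)) := by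
  rw [injective_iff_map_eq_zero]
  intro h hh
  by_contra hne
  obtain ⟨m, hm⟩ := h.coeff.support.finite_toSet.bddBelow
  have hpos : ∀ b ∈ h.coeff.support, 0 ≤ b - m := fun b hb => sub_nonneg.2 (hm hb)
  -- multiplying by `t^(-m)` clears denominators
  set P : MvPolynomial ι ℚ :=
    ∑ b ∈ h.coeff.support, MvPolynomial.monomial (natExponent (b - m)) (h.coeff b)
  have hP : algebraMap _ (KK ι) P = laurentEval h * tmon ι (-m) := by
    rw [← AddMonoidAlgebra.ofCoeff_coeff h, laurentEval_ofCoeff, Finset.sum_mul, map_sum]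
    refine Finset.sum_congr rfl fun b hb => ?_
    rw [mul_assoc, ← tmon_add, ← sub_eq_add_neg, algebraMap_monomial_natExponent (hpos b hb)]
  rw [hh, zero_mul, map_eq_zero_iff _ (IsFractionRing.injective _ _)] at hP
  obtain ⟨b₀, hb₀⟩ := Finsupp.support_nonempty_iff.2 (mt AddMonoidAlgebra.coeff_eq_zero.1 hne)
  have hcoeff : P.coeff (natExponent (b₀ - m)) = h.coeff b₀ := by
    rw [MvPolynomial.coeff_sum, Finset.sum_eq_single b₀ _ (fun h => absurd hb₀ h)]
    · simp
    intro b hb hne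
    rw [MvPolynomial.coeff_monomial, if_neg]
    intro he
    refine hne (sub_left_injective (b := m) (funext fun i => ?_))
    have := DFunLike.congr_fun he i
    have := hpos b hb i
    have := hpos b₀ hb₀ i
    simp only [natExponent, Finsupp.coe_equivFunOnFinite_symm, Pi.zero_apply] at *
    omega
  rw [hP, MvPolynomial.coeff_zero] at hcoeff
  exact Finsupp.mem_support_iff.1 hb₀ hcoeff.symm

end LaurentSeries

section FormalSeries

variable {ι : Type}

noncomputable def translateHom : Multiplicative (ι → ℤ) →* Module.End ℚ ((ι → ℤ) → ℚ) where
  toFun b := LinearMap.funLeft ℚ ℚ (· - b.toAdd)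
  map_one' := by ext; simp
  map_mul' b c := by ext; simp [sub_sub]

/-- Laurent polynomials act on formal Laurent series `(ι → ℤ) → ℚ` by multiplication. -/
noncomputable def seriesAction : AddMonoidAlgebra ℚ (ι → ℤ) →ₐ[ℚ] Module.End ℚ ((ι → ℤ) → ℚ) :=
  AddMonoidAlgebra.lift ℚ _ _ translateHom

lemma seriesAction_apply (q : AddMonoidAlgebra ℚ (ι → ℤ)) (f : (ι → ℤ) → ℚ) (a : ι → ℤ) :
    seriesAction q f a = ∑ b ∈ q.coeff.support, q.coeff b * f (a - b) := by
  simp [seriesAction, AddMonoidAlgebra.lift_apply, Finsupp.sum, translateHom]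

lemma seriesAction_single (v : ι → ℤ) (f : (ι → ℤ) → ℚ) :
    seriesAction (AddMonoidAlgebra.single v 1) f = fun a => f (a - v) := by
  ext a
  simp [seriesAction_apply]

lemma seriesAction_coeff (q g : AddMonoidAlgebra ℚ (ι → ℤ)) :
    seriesAction q g.coeff = (q * g).coeff := by
  ext a
  simp [seriesAction_apply, AddMonoidAlgebra.coeff_mul_apply_left, Finsupp.sum, neg_add_eq_sub]

lemma seriesAction_comm (q q' : AddMonoidAlgebra ℚ (ι → ℤ)) (f : (ι → ℤ) → ℚ) :
    seriesAction q (seriesAction q' f) = seriesAction q' (seriesAction q f) := by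
  rw [← Module.End.mul_apply, ← map_mul, mul_comm, map_mul, Module.End.mul_apply]

def SupportedIn (B : Set ι) (f : (ι → ℤ) → ℚ) : Prop :=
  ∀ x, f x ≠ 0 → ∀ i ∉ B, x i = 0

lemma eq_indicator_add_of_support {B : Set ι} {y z : ι → ℤ} (hy : ∀ i ∉ B, y i = 0)
    (hz : ∀ i ∈ B, z i = 0) : y = B.indicator (y + z) := by
  ext i
  by_cases hi : i ∈ B <;> simp [hi, hy, hz]

variable {B : Set ι} {f f' : (ι → ℤ) → ℚ}

lemma support_mul_sub_subset (hf : SupportedIn B f) (hf' : SupportedIn Bᶜ f') (w : ι → ℤ) :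
    (fun y => f y * f' (w - y)).support ⊆ {B.indicator w} := by
  intro y hy
  obtain ⟨h, h'⟩ := mul_ne_zero_iff.1 hy
  have := eq_indicator_add_of_support (hf y h) fun i hi => hf' _ h' i (not_not_intro hi)
  rwa [add_sub_cancel] at this

lemma finsum_mul_sub (hf : SupportedIn B f) (hf' : SupportedIn Bᶜ f') (w : ι → ℤ) :
    ∑ᶠ y, f y * f' (w - y) = f (B.indicator w) * f' (Bᶜ.indicator w) := by
  rw [finsum_eq_single _ (B.indicator w) fun y hy => Function.notMem_support.1
    fun h => hy (support_mul_sub_subset hf hf' w h), Set.indicator_compl]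

lemma coeff_mul_eq_finsum (g g' : AddMonoidAlgebra ℚ (ι → ℤ)) (a : ι → ℤ) :
    (g * g').coeff a = ∑ᶠ x, g.coeff x * g'.coeff (a - x) := by
  rw [finsum_eq_sum_of_support_subset (s := g.coeff.support) _
    fun x hx => Finsupp.mem_support_iff.2 (left_ne_zero_of_mul (Function.mem_support.1 hx))]
  simp [AddMonoidAlgebra.coeff_mul_apply_left, Finsupp.sum, neg_add_eq_sub]

/-- `(q f) (q' f') = (q q') (f f')`, where the product of the series `q f` and `q' f'` is the
finite sum on the left, and that of `f` and `f'` is the one computed in `finsum_mul_sub`. -/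
lemma finsum_seriesAction_mul (hf : SupportedIn B f) (hf' : SupportedIn Bᶜ f')
    (q q' : AddMonoidAlgebra ℚ (ι → ℤ)) (a : ι → ℤ) :
    ∑ᶠ x, seriesAction q f x * seriesAction q' f' (a - x)
      = seriesAction (q * q') (fun a => f (B.indicator a) * f' (Bᶜ.indicator a)) a := by
  set F : (ι → ℤ) → (ι → ℤ) → ℚ := fun w y => f y * f' (w - y)
  set term : (ι → ℤ) → (ι → ℤ) → (ι → ℤ) → ℚ :=
    fun u v x => q.coeff u * q'.coeff v * F (a - u - v) (x - u)
  have hexpand : ∀ x, seriesAction q f x * seriesAction q' f' (a - x)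
      = ∑ u ∈ q.coeff.support, ∑ v ∈ q'.coeff.support, term u v x := by
    intro x
    simp only [seriesAction_apply, Finset.sum_mul_sum, term, F]
    refine Finset.sum_congr rfl fun u _ => Finset.sum_congr rfl fun v _ => ?_
    rw [show a - u - v - (x - u) = a - x - v by abel]
    ring
  have hfin : ∀ u v, (term u v).HasFiniteSupport := by
    intro u v
    refine ((Set.finite_singleton (B.indicator (a - u - v))).preimage
      (sub_left_injective (b := u)).injOn).subset fun x hx => ?_
    exact support_mul_sub_subset hf hf' _ (right_ne_zero_of_mul (Function.mem_support.1 hx))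
  calc ∑ᶠ x, seriesAction q f x * seriesAction q' f' (a - x)
      = ∑ u ∈ q.coeff.support, ∑ v ∈ q'.coeff.support, ∑ᶠ x, term u v x := by
        rw [finsum_congr hexpand, finsum_sum_comm _ _ fun u _ =>
          Function.HasFiniteSupport.sum (fun v => hfin u v) _]
        exact Finset.sum_congr rfl fun u _ => finsum_sum_comm _ _ fun v _ => hfin u v
    _ = ∑ u ∈ q.coeff.support, ∑ v ∈ q'.coeff.support,
          q.coeff u * q'.coeff v *
            (f (B.indicator (a - u - v)) * f' (Bᶜ.indicator (a - u - v))) := by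
        refine Finset.sum_congr rfl fun u _ => Finset.sum_congr rfl fun v _ => ?_
        rw [← mul_finsum, ← finsum_mul_sub hf hf']
        exact congrArg _ (finsum_comp_equiv (Equiv.subRight u))
    _ = _ := by
        simp only [map_mul, Module.End.mul_apply, seriesAction_apply, Finset.mul_sum, mul_assoc,
          sub_sub]

end FormalSeries

section Represents

variable {ι : Type} [Fintype ι]

lemma represents_iff {r : KK ι} {f : (ι → ℤ) → ℚ} :
    Represents r f ↔ ∃ q : AddMonoidAlgebra ℚ (ι → ℤ), q ≠ 0 ∧
      ∃ g : AddMonoidAlgebra ℚ (ι → ℤ), ⇑g.coeff = seriesAction q f ∧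
        r * laurentEval q = laurentEval g := by
  simp only [Represents, AddMonoidAlgebra.exists, ne_eq, AddMonoidAlgebra.ofCoeff_eq_zero,
    laurentEval_ofCoeff, funext_iff, seriesAction_apply]

lemma laurentEval_ne_zero {q : AddMonoidAlgebra ℚ (ι → ℤ)} (hq : q ≠ 0) : laurentEval q ≠ 0 :=
  (map_ne_zero_iff _ laurentEval_injective).2 hq

theorem Represents.unique {r r' : KK ι} {f : (ι → ℤ) → ℚ}
    (h : Represents r f) (h' : Represents r' f) : r = r' := by
  obtain ⟨q, hq, g, hg, hr⟩ := represents_iff.1 h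
  obtain ⟨q', hq', g', hg', hr'⟩ := represents_iff.1 h'
  -- both `q' g` and `q g'` are the product of `q q'` with the series `f`
  have hcross : q' * g = q * g' := by
    rw [← AddMonoidAlgebra.coeff_inj, ← DFunLike.coe_fn_eq, ← seriesAction_coeff,
      ← seriesAction_coeff, hg, hg', seriesAction_comm]
  refine mul_right_cancel₀ (mul_ne_zero (laurentEval_ne_zero hq) (laurentEval_ne_zero hq')) ?_
  calc r * (laurentEval q * laurentEval q') = laurentEval (q' * g) := by
        rw [map_mul, ← hr]; ring
    _ = r' * (laurentEval q * laurentEval q') := by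
        rw [hcross, map_mul, ← hr']; ring

theorem Represents.translate {r : KK ι} {f : (ι → ℤ) → ℚ} (h : Represents r f) (v : ι → ℤ) :
    Represents (tmon ι v * r) (fun a => f (a - v)) := by
  obtain ⟨q, hq, g, hg, hr⟩ := represents_iff.1 h
  refine represents_iff.2 ⟨q, hq, .single v 1 * g, ?_, ?_⟩
  · rw [← seriesAction_coeff, hg, seriesAction_comm, seriesAction_single]
  · rw [map_mul, laurentEval_single, mul_assoc, hr]

theorem Represents.mul_of_supportedIn {B : Set ι} {f f' : (ι → ℤ) → ℚ} {r r' : KK ι}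
    (hf : SupportedIn B f) (hf' : SupportedIn Bᶜ f') (h : Represents r f) (h' : Represents r' f') :
    Represents (r * r') (fun a => f (B.indicator a) * f' (Bᶜ.indicator a)) := by
  obtain ⟨q, hq, g, hg, hr⟩ := represents_iff.1 h
  obtain ⟨q', hq', g', hg', hr'⟩ := represents_iff.1 h'
  refine represents_iff.2 ⟨q * q', mul_ne_zero hq hq', g * g', funext fun a => ?_, ?_⟩
  · rw [coeff_mul_eq_finsum, hg, hg', finsum_seriesAction_mul hf hf']
  · rw [map_mul, map_mul, ← hr, ← hr']
    ring

/-- The product of the series `f c`, `c ∈ s`, where `f c` lives on the coordinate block `B c`. -/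
noncomputable def blockProd {κ : Type} (B : κ → Set ι) (f : κ → (ι → ℤ) → ℚ) (s : Finset κ)
    (a : ι → ℤ) : ℚ :=
  if ∀ i ∉ ⋃ c ∈ s, B c, a i = 0 then ∏ c ∈ s, f c ((B c).indicator a) else 0

variable {κ : Type} {B : κ → Set ι} {f : κ → (ι → ℤ) → ℚ}

lemma represents_blockProd_empty : Represents 1 (blockProd B f ∅) := by
  refine represents_iff.2 ⟨1, one_ne_zero, 1, ?_, by rw [one_mul]⟩
  ext a
  rw [map_one, Module.End.one_apply]
  simp [blockProd, AddMonoidAlgebra.one_def, AddMonoidAlgebra.coeff_single, Finsupp.single_apply,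
    funext_iff, eq_comm]

lemma blockProd_supportedIn_compl {c : κ} {s : Finset κ}
    (hB : Pairwise fun c c' => Disjoint (B c) (B c')) (hc : c ∉ s) :
    SupportedIn (B c)ᶜ (blockProd B f s) := by
  intro x hx i hi
  unfold blockProd at hx
  split_ifs at hx with hsupp
  · refine hsupp i ?_
    simp only [Set.mem_iUnion, not_exists]
    exact fun c' hc' hic' =>
      Set.disjoint_left.1 (hB (ne_of_mem_of_not_mem hc' hc)) hic' (not_not.1 hi)
  · exact absurd rfl hx

lemma blockProd_insert {c : κ} {s : Finset κ} (hB : Pairwise fun c c' => Disjoint (B c) (B c'))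
    (hc : c ∉ s) (a : ι → ℤ) : blockProd B f (insert c s) a
      = f c ((B c).indicator a) * blockProd B f s ((B c)ᶜ.indicator a) := by
  have hprod : ∏ c' ∈ s, f c' ((B c').indicator ((B c)ᶜ.indicator a))
      = ∏ c' ∈ s, f c' ((B c').indicator a) := by
    refine Finset.prod_congr rfl fun c' hc' => ?_
    rw [Set.indicator_indicator, Set.inter_eq_left.2
      (Set.subset_compl_iff_disjoint_right.2 (hB (ne_of_mem_of_not_mem hc' hc)))]
  have hsupp : (∀ i ∉ ⋃ c' ∈ insert c s, B c', a i = 0)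
      ↔ ∀ i ∉ ⋃ c' ∈ s, B c', (B c)ᶜ.indicator a i = 0 := by
    simp only [Finset.set_biUnion_insert, Set.mem_union, not_or, Set.indicator_apply,
      Set.mem_compl_iff, ite_eq_right_iff]
    exact ⟨fun h i hi hic => h i ⟨hic, hi⟩, fun h i hi => h i hi.2 hi.1⟩
  unfold blockProd
  rw [Finset.prod_insert hc, hprod]
  by_cases h : ∀ i ∉ ⋃ c' ∈ s, B c', (B c)ᶜ.indicator a i = 0
  · rw [if_pos (hsupp.2 h), if_pos h]
  · rw [if_neg (mt hsupp.1 h), if_neg h, mul_zero]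

theorem Represents.blockProd (hB : Pairwise fun c c' => Disjoint (B c) (B c'))
    (hf : ∀ c, SupportedIn (B c) (f c)) {g : κ → KK ι} (h : ∀ c, Represents (g c) (f c))
    (s : Finset κ) : Represents (∏ c ∈ s, g c) (blockProd B f s) := by
  induction s using Finset.induction_on with
  | empty => exact represents_blockProd_empty
  | insert c s hc ih =>
    rw [Finset.prod_insert hc, funext (blockProd_insert hB hc)]
    exact (h c).mul_of_supportedIn (hf c) (blockProd_supportedIn_compl hB hc) ih

end Represents

lemma indicator_sum_of_support_subset {κ ι M : Type} [Fintype κ] [AddCommMonoid M]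
    {B : κ → Set ι} (hB : Pairwise fun c c' => Disjoint (B c) (B c')) {f : κ → ι → M}
    (hf : ∀ c, ∀ i ∉ B c, f c i = 0) (c : κ) : (B c).indicator (∑ c', f c') = f c := by
  ext i
  by_cases hi : i ∈ B c
  · rw [Set.indicator_of_mem hi, Finset.sum_apply, Finset.sum_eq_single c
      (fun c' _ hc' => hf c' i (Set.disjoint_left.1 (hB hc'.symm) hi)) (by simp)]
  · rw [Set.indicator_of_notMem hi, hf c i hi]

section GelfandTsetlin

open Filter Topology

variable {n : ℕ}

lemma entryR_eq (x : GTIdx n → ℝ) {p : GTIdx n} {i j : ℕ} (hi : i = p.1) (hj : j = p.2) :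
    entryR x i j = x p := by
  subst hi hj
  simp [entryR]

lemma entryR_of_lt (x : GTIdx n → ℝ) {i j : ℕ} (hi : i < n) (hj : j < n) :
    entryR x i j = x (⟨i, hi⟩, ⟨j, hj⟩) :=
  entryR_eq x rfl rfl

def Interlaces (x : GTIdx n → ℝ) (p q : GTIdx n) : Prop :=
  ((q.2 : ℕ) = p.2 → x p ≤ x q) ∧ ((q.2 : ℕ) = p.2 + 1 → x q ≤ x p)

lemma forall_entryR_zero_iff {x : GTIdx n → ℝ} {lam : Fin n → ℝ} :
    (∀ j : Fin n, entryR x 0 j = lam j) ↔ ∀ p : GTIdx n, (p.1 : ℕ) = 0 → x p = lam p.2 := by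
  constructor
  · intro h p hp
    rw [← h, entryR_eq x hp.symm rfl]
  · intro h j
    rw [← h (⟨0, j.pos⟩, j) rfl, entryR_of_lt x j.pos j.isLt]

lemma interlacing_iff {x : GTIdx n → ℝ} :
    (∀ i j : ℕ, i + 1 + j < n →
        entryR x (i + 1) j ≤ entryR x i j ∧ entryR x i (j + 1) ≤ entryR x (i + 1) j)
      ↔ ∀ p q, upEdge n p q → Interlaces x p q := by
  constructor
  · rintro h p q ⟨hp, -, hrow, -⟩
    have hlt : (q.1 : ℕ) + 1 + p.2 < n := by rw [hrow]; exact hp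
    obtain ⟨h₁, h₂⟩ := h q.1 p.2 hlt
    rw [entryR_eq x hrow rfl] at h₁ h₂
    exact ⟨fun hcol => by rwa [entryR_eq x rfl hcol.symm] at h₁,
      fun hcol => by rwa [entryR_eq x rfl hcol.symm] at h₂⟩
  · intro h i j hij
    have hi : i < n := by omega
    have hj : j < n := by omega
    have hdown := h (⟨i + 1, by omega⟩, ⟨j, hj⟩) (⟨i, hi⟩, ⟨j, hj⟩)
      ⟨hij, show i + j < n by omega, rfl, Or.inl rfl⟩
    have hdiag := h (⟨i + 1, by omega⟩, ⟨j, hj⟩) (⟨i, hi⟩, ⟨j + 1, by omega⟩)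
      ⟨hij, show i + (j + 1) < n by omega, rfl, Or.inr rfl⟩
    rw [entryR_of_lt x (by omega) hj, entryR_of_lt x hi hj, entryR_of_lt x hi (by omega)]
    exact ⟨hdown.1 rfl, hdiag.2 rfl⟩

lemma mem_GTPoly_iff {lam : Fin n → ℝ} {x : GTIdx n → ℝ} :
    x ∈ GTPoly n lam ↔ (∀ p : GTIdx n, (p.1 : ℕ) = 0 → x p = lam p.2) ∧
      (∀ p q, upEdge n p q → Interlaces x p q) ∧ ∀ p, ¬ GTValid n p → x p = 0 :=
  forall_entryR_zero_iff.and (interlacing_iff.and Iff.rfl)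

/-- The directions `y - v` of the tangent cone at `v`: only the interlacing inequalities that are
tight at `v` (the edges of `Γ_v`) constrain them. -/
def tangentDirections (n : ℕ) (A : GTIdx n → ℝ) : Set (GTIdx n → ℝ) :=
  {ε | (∀ p : GTIdx n, (p.1 : ℕ) = 0 → ε p = 0) ∧
    (∀ p q, upEdge n p q → A p = A q → Interlaces ε p q) ∧ ∀ p, ¬ GTValid n p → ε p = 0}

lemma eventually_add_mul_le {a b da db : ℝ} (hab : a ≤ b) (htight : a = b → da ≤ db) :
    ∀ᶠ s in 𝓝[>] (0 : ℝ), a + s * da ≤ b + s * db := by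
  rcases hab.lt_or_eq with hlt | heq
  · refine Eventually.filter_mono nhdsWithin_le_nhds ?_
    exact (ContinuousAt.eventually_lt (by fun_prop) (by fun_prop) (by simpa using hlt)).mono
      fun s hs => hs.le
  · filter_upwards [self_mem_nhdsWithin] with s hs
    rw [heq]
    gcongr
    · exact hs.le
    · exact htight heq

lemma eventually_interlaces_add_smul {A ε : GTIdx n → ℝ} {p q : GTIdx n} (hA : Interlaces A p q)
    (hε : A p = A q → Interlaces ε p q) :
    ∀ᶠ s in 𝓝[>] (0 : ℝ), Interlaces (A + s • ε) p q := by
  simp only [Interlaces, Pi.add_apply, Pi.smul_apply, smul_eq_mul]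
  refine (eventually_imp_distrib_left.2 fun h => ?_).and (eventually_imp_distrib_left.2 fun h => ?_)
  · exact eventually_add_mul_le (hA.1 h) fun e => (hε e).1 h
  · exact eventually_add_mul_le (hA.2 h) fun e => (hε e.symm).2 h

theorem mem_tangentCone_GTPoly_iff {lam : Fin n → ℝ} {A y : GTIdx n → ℝ} (hA : A ∈ GTPoly n lam) :
    y ∈ tangentCone (GTPoly n lam) A ↔ y - A ∈ tangentDirections n A := by
  obtain ⟨hA₀, hAI, hAV⟩ := mem_GTPoly_iff.1 hA
  constructor
  · rintro ⟨x, hx, t, ht, rfl⟩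
    obtain ⟨hx₀, hxI, hxV⟩ := mem_GTPoly_iff.1 hx
    rw [add_sub_cancel_left]
    refine ⟨fun p hp => ?_, fun p q hpq he => ?_, fun p hp => ?_⟩
    · simp [hx₀ p hp, hA₀ p hp]
    · simp only [Interlaces, Pi.smul_apply, Pi.sub_apply, smul_eq_mul, he]
      exact ⟨fun h => mul_le_mul_of_nonneg_left (by linarith [(hxI p q hpq).1 h]) ht,
        fun h => mul_le_mul_of_nonneg_left (by linarith [(hxI p q hpq).2 h]) ht⟩
    · simp [hxV p hp, hAV p hp]
  · rintro ⟨hε₀, hεI, hεV⟩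
    have hev : ∀ᶠ s in 𝓝[>] (0 : ℝ), ∀ p q, upEdge n p q → Interlaces (A + s • (y - A)) p q := by
      simp only [eventually_all]
      exact fun p q hpq => eventually_interlaces_add_smul (hAI p q hpq) (hεI p q hpq)
    obtain ⟨s, hsI, hs⟩ := (hev.and self_mem_nhdsWithin).exists
    refine ⟨A + s • (y - A), mem_GTPoly_iff.2 ⟨fun p hp => ?_, hsI, fun p hp => ?_⟩,
      s⁻¹, inv_nonneg.2 (le_of_lt hs), ?_⟩
    · simp [hA₀ p hp, hε₀ p hp]
    · simp [hAV p hp, hεV p hp]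
    · rw [add_sub_cancel_left, smul_smul, inv_mul_cancel₀ (ne_of_gt hs), one_smul,
        add_sub_cancel]

variable {A : GTIdx n → ℝ}

def block (n : ℕ) (A : GTIdx n → ℝ) (c : (Gamma n A).ConnectedComponent) : Set (GTIdx n) :=
  {p | ∃ hp : GTValid n p, (Gamma n A).connectedComponentMk ⟨p, hp⟩ = c}

lemma block_pairwise_disjoint :
    Pairwise fun c c' => Disjoint (block n A c) (block n A c') := by
  intro c c' hne
  exact Set.disjoint_left.2 fun _ ⟨_, h⟩ ⟨_, h'⟩ => hne (h.symm.trans h')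

lemma mem_block_of_mk_eq {p : GTNode n} {c : (Gamma n A).ConnectedComponent}
    (h : (Gamma n A).connectedComponentMk p = c) : p.1 ∈ block n A c :=
  ⟨p.2, h⟩

lemma mem_block_mk (p : GTNode n) : p.1 ∈ block n A ((Gamma n A).connectedComponentMk p) :=
  mem_block_of_mk_eq rfl

lemma mem_iUnion_block {p : GTIdx n} : p ∈ ⋃ c, block n A c ↔ GTValid n p := by
  simp only [Set.mem_iUnion]
  exact ⟨fun ⟨_, hp, _⟩ => hp, fun hp => ⟨_, mem_block_mk ⟨p, hp⟩⟩⟩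

lemma mem_block_of_upEdge {c : (Gamma n A).ConnectedComponent} {p q : GTIdx n}
    (hp : p ∈ block n A c) (hpq : upEdge n p q) (he : A p = A q) : q ∈ block n A c := by
  obtain ⟨hp, rfl⟩ := hp
  have hadj : (Gamma n A).Adj ⟨p, hp⟩ ⟨q, hpq.2.1⟩ := ⟨Or.inl hpq, he⟩
  exact ⟨hpq.2.1, (SimpleGraph.ConnectedComponent.sound hadj.reachable).symm⟩

lemma sum_indicator_block {ε : GTIdx n → ℝ} (hε : ∀ p, ¬ GTValid n p → ε p = 0) :
    ∑ c, (block n A c).indicator ε = ε := by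
  ext p
  rw [Finset.sum_apply, ← Finset.indicator_biUnion_apply _ _
    (block_pairwise_disjoint.set_pairwise _)]
  by_cases hp : GTValid n p
  · exact Set.indicator_of_mem (by simpa using mem_iUnion_block.2 hp) _
  · rw [Set.indicator_of_notMem (by simpa using mt mem_iUnion_block.1 hp), hε p hp]

lemma mem_tangentDirections_iff {ε : GTIdx n → ℝ} :
    ε ∈ tangentDirections n A ↔
      (∀ p, ¬ GTValid n p → ε p = 0) ∧ ∀ c, (block n A c).indicator ε ∈ compCone n A c := by
  constructor
  · rintro ⟨hε₀, hεI, hεV⟩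
    refine ⟨hεV, fun c => ⟨fun p hp => Set.indicator_of_notMem (s := block n A c) hp ε,
      fun p hpc hp₀ => ?_, fun p q hpc hpq he => ?_⟩⟩
    · rw [Set.indicator_of_mem (mem_block_of_mk_eq hpc)]
      exact hε₀ _ hp₀
    · have hq := mem_block_of_upEdge (mem_block_of_mk_eq hpc) hpq he
      rw [Set.indicator_of_mem (mem_block_of_mk_eq hpc), Set.indicator_of_mem hq]
      exact hεI _ _ hpq he
  · rintro ⟨hεV, hC⟩
    refine ⟨fun p hp₀ => ?_, fun p q hpq he => ?_, hεV⟩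
    · have hp : GTValid n p := by simp [GTValid, hp₀]
      have := (hC _).2.1 ⟨p, hp⟩ rfl hp₀
      rwa [Set.indicator_of_mem (mem_block_mk ⟨p, hp⟩)] at this
    · have hp := mem_block_mk (A := A) ⟨p, hpq.1⟩
      have := (hC _).2.2 ⟨p, hpq.1⟩ ⟨q, hpq.2.1⟩ rfl hpq he
      rwa [Set.indicator_of_mem hp, Set.indicator_of_mem (mem_block_of_upEdge hp hpq he)] at this

theorem tangentCone_GTPoly_eq {lam : Fin n → ℝ} (hA : A ∈ GTPoly n lam) :
    tangentCone (GTPoly n lam) A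
      = {y | ∃ f : (Gamma n A).ConnectedComponent → (GTIdx n → ℝ),
          (∀ c, f c ∈ compCone n A c) ∧ y = A + ∑ᶠ c, f c} := by
  ext y
  rw [mem_tangentCone_GTPoly_iff hA, mem_tangentDirections_iff]
  constructor
  · rintro ⟨hV, hC⟩
    refine ⟨fun c => (block n A c).indicator (y - A), hC, ?_⟩
    rw [finsum_eq_sum_of_fintype, sum_indicator_block hV, add_sub_cancel]
  · rintro ⟨f, hf, rfl⟩
    rw [add_sub_cancel_left, finsum_eq_sum_of_fintype]
    refine ⟨fun p hp => ?_, fun c => ?_⟩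
    · simp [Finset.sum_apply, fun c => (hf c).1 p fun ⟨hp', _⟩ => hp hp']
    · rw [indicator_sum_of_support_subset block_pairwise_disjoint (fun c => (hf c).1) c]
      exact hf c

lemma span_compCone_le (c : (Gamma n A).ConnectedComponent) :
    Submodule.span ℝ (compCone n A c) ≤ Submodule.pi (block n A c)ᶜ fun _ => ⊥ :=
  Submodule.span_le.2 fun _ hx p hp => (Submodule.mem_bot ℝ).2 (hx.1 p hp)

theorem eq_zero_of_finsum_eq_zero_of_mem_span_compCone
    {f : (Gamma n A).ConnectedComponent → (GTIdx n → ℝ)}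
    (hf : ∀ c, f c ∈ Submodule.span ℝ (compCone n A c)) (hsum : ∑ᶠ c, f c = 0)
    (c : (Gamma n A).ConnectedComponent) : f c = 0 := by
  have hsupp : ∀ c, ∀ p ∉ block n A c, f c p = 0 := fun c p hp =>
    (Submodule.mem_bot ℝ).1 (Submodule.mem_pi.1 (span_compCone_le c (hf c)) p hp)
  rw [← indicator_sum_of_support_subset block_pairwise_disjoint hsupp c,
    ← finsum_eq_sum_of_fintype, hsum, Set.indicator_zero']

lemma supportedIn_indSet_compCone (c : (Gamma n A).ConnectedComponent) :
    SupportedIn (block n A c) (indSet (compCone n A c)) := by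
  intro x hx p hp
  unfold indSet at hx
  split_ifs at hx with hmem
  · exact Int.cast_eq_zero.1 (hmem.1 p hp)
  · exact absurd rfl hx

lemma indSet_tangentCone_GTPoly {lam : Fin n → ℝ} (hA : A ∈ GTPoly n lam) {vZ : GTIdx n → ℤ}
    (hvZ : ∀ p, (vZ p : ℝ) = A p) (a : GTIdx n → ℤ) :
    indSet (tangentCone (GTPoly n lam) A) a
      = blockProd (block n A) (fun c => indSet (compCone n A c)) Finset.univ (a - vZ) := by
  have hcast : (fun p => (a p : ℝ)) - A = (Int.cast : ℤ → ℝ) ∘ (a - vZ) := by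
    ext p
    simp [hvZ]
  have hind : ∀ c, (fun p => (((block n A c).indicator (a - vZ) p : ℤ) : ℝ))
      = (block n A c).indicator ((Int.cast : ℤ → ℝ) ∘ (a - vZ)) := fun c =>
    (Set.indicator_comp_of_zero Int.cast_zero).symm
  simp only [indSet, blockProd, mem_tangentCone_GTPoly_iff hA, hcast, mem_tangentDirections_iff,
    hind, Finset.prod_boole, Finset.mem_univ, Set.iUnion_true, mem_iUnion_block, true_implies,
    Function.comp_apply, Int.cast_eq_zero, ite_and]

end GelfandTsetlin

theorem statement14_general (n : ℕ) (lam : Fin n → ℤ)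
    (A : GTIdx n → ℝ)
    (hA : A ∈ Set.extremePoints ℝ (GTPoly n (fun i => (lam i : ℝ))))
    (vZ : GTIdx n → ℤ) (hvZ : ∀ p, (vZ p : ℝ) = A p) :
    (tangentCone (GTPoly n (fun i => (lam i : ℝ))) A
       = {y | ∃ f : (Gamma n A).ConnectedComponent → (GTIdx n → ℝ),
           (∀ c, f c ∈ compCone n A c) ∧ y = A + ∑ᶠ c, f c}) ∧
    (∀ f : (Gamma n A).ConnectedComponent → (GTIdx n → ℝ),
       (∀ c, f c ∈ Submodule.span ℝ (compCone n A c)) → ∑ᶠ c, f c = 0 → ∀ c, f c = 0) ∧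
    (∀ r : KK (GTIdx n),
      Represents r (indSet (tangentCone (GTPoly n (fun i => (lam i : ℝ))) A)) →
      ∀ g : (Gamma n A).ConnectedComponent → KK (GTIdx n),
        (∀ c, Represents (g c) (indSet (compCone n A c))) →
        r = tmon (GTIdx n) vZ * ∏ᶠ c, g c) := by
  refine ⟨tangentCone_GTPoly_eq hA.1, fun f hf hsum =>
    eq_zero_of_finsum_eq_zero_of_mem_span_compCone hf hsum, fun r hr g hg => ?_⟩
  have hprod := (Represents.blockProd block_pairwise_disjoint supportedIn_indSet_compCone hg
    Finset.univ).translate vZ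
  rw [← funext (indSet_tangentCone_GTPoly hA.1 hvZ)] at hprod
  rw [finprod_eq_prod_of_fintype]
  exact hr.unique hprod

/-- the tangent cone at a vertex v of GT_λ decomposes as the direct Minkowski
sum v + Σ_Δ C_Δ over the connected components Δ of Γ_v, and consequently
σ(C_v) = t^v · Π_Δ σ(C_Δ). -/
theorem statement14 (n : ℕ) (lam : Fin n → ℤ)
    (hreg : ∀ i j : Fin n, i < j → lam j < lam i)
    (A : GTIdx n → ℝ)
    (hA : A ∈ Set.extremePoints ℝ (GTPoly n (fun i => (lam i : ℝ))))
    (vZ : GTIdx n → ℤ) (hvZ : ∀ p, (vZ p : ℝ) = A p) :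
    (tangentCone (GTPoly n (fun i => (lam i : ℝ))) A
       = {y | ∃ f : (Gamma n A).ConnectedComponent → (GTIdx n → ℝ),
           (∀ c, f c ∈ compCone n A c) ∧ y = A + ∑ᶠ c, f c}) ∧
    (∀ f : (Gamma n A).ConnectedComponent → (GTIdx n → ℝ),
       (∀ c, f c ∈ Submodule.span ℝ (compCone n A c)) → ∑ᶠ c, f c = 0 → ∀ c, f c = 0) ∧
    (∀ r : KK (GTIdx n),
      Represents r (indSet (tangentCone (GTPoly n (fun i => (lam i : ℝ))) A)) →
      ∀ g : (Gamma n A).ConnectedComponent → KK (GTIdx n),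
        (∀ c, Represents (g c) (indSet (compCone n A c))) →
        r = tmon (GTIdx n) vZ * ∏ᶠ c, g c) :=
  statement14_general n lam A hA vZ hvZ
end
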